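/- Scaled three-state HLLC positivity (Lemma 2.11): for any parameters ζ₁, ζ₂, ζ₃ > 0, any admissible states U_L, U_M, U_R ∈ G, and any λ > 0 satisfying λ · max{α_max(U_L), α_max(U_M), α_max(U_R)} ≤ 1/2, one has ζ₂U_M − λ(F^hllc(ζ₂U_M, ζ₃U_R) − F^hllc(ζ₁U_L, ζ₂U_M)) ∈ G. -/

import Mathlib

noncomputable section

/-- A 1D state `U = (ρ, m, E)`. -/
abbrev St : Type := ℝ × ℝ × ℝ

/-- The admissible set `G = {(ρ, m, E) : ρ > 0, E − m²/(2ρ) > 0}`. -/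
def admG : Set St := {U | 0 < U.1 ∧ 0 < U.2.2 - U.2.1 ^ 2 / (2 * U.1)}

/-- The velocity `u = m/ρ`. -/
def vel (U : St) : ℝ := U.2.1 / U.1

/-- The pressure `p = (γ−1)(E − m²/(2ρ))`. -/
def press (γ : ℝ) (U : St) : ℝ := (γ - 1) * (U.2.2 - U.2.1 ^ 2 / (2 * U.1))

/-- The sound speed `√(γ p / ρ)`. -/
def sound (γ : ℝ) (U : St) : ℝ := Real.sqrt (γ * press γ U / U.1)

/-- The specific internal energy `e = (E − m²/(2ρ))/ρ`. -/
def specE (U : St) : ℝ := (U.2.2 - U.2.1 ^ 2 / (2 * U.1)) / U.1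

/-- The Euler flux `F(U) = (ρu, ρu² + p, (E+p)u)`. -/
def eulerF (γ : ℝ) (U : St) : St :=
  (U.1 * vel U, U.1 * vel U ^ 2 + press γ U, (U.2.2 + press γ U) * vel U)

/-- `α₋(U) = u − √(γp/ρ)`. -/
def alphaMinus (γ : ℝ) (U : St) : ℝ := vel U - sound γ U

/-- `α₊(U) = u + √(γp/ρ)`. -/
def alphaPlus (γ : ℝ) (U : St) : ℝ := vel U + sound γ U

/-- `α_max(U) = |u| + √(γp/ρ)`. -/
def alphaMax (γ : ℝ) (U : St) : ℝ := |vel U| + sound γ U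

/-- Left wave speed `S_L = min(α₋(U_L), α₋(U_R))`. -/
def SL (γ : ℝ) (UL UR : St) : ℝ := min (alphaMinus γ UL) (alphaMinus γ UR)

/-- Right wave speed `S_R = max(α₊(U_L), α₊(U_R))`. -/
def SR (γ : ℝ) (UL UR : St) : ℝ := max (alphaPlus γ UL) (alphaPlus γ UR)

/-- Middle wave speed `S_*`. -/
def Sstar (γ : ℝ) (UL UR : St) : ℝ :=
  (press γ UR - press γ UL + UL.1 * vel UL * (SL γ UL UR - vel UL)
      - UR.1 * vel UR * (SR γ UL UR - vel UR)) /
    (UL.1 * (SL γ UL UR - vel UL) - UR.1 * (SR γ UL UR - vel UR))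

/-- HLLC intermediate state
`U_{*i} = ρ_i (S_i − u_i)/(S_i − S_*) · (1, S_*, E_i/ρ_i + (S_* − u_i)(S_* + p_i/(ρ_i(S_i − u_i))))`. -/
def Ustar (γ : ℝ) (Si Sst : ℝ) (Ui : St) : St :=
  (Ui.1 * ((Si - vel Ui) / (Si - Sst))) •
    (((1 : ℝ), Sst,
      Ui.2.2 / Ui.1 + (Sst - vel Ui) * (Sst + press γ Ui / (Ui.1 * (Si - vel Ui)))) : St)

/-- Intermediate flux `F_{*i} = F(U_i) + S_i (U_{*i} − U_i)`. -/
def Fstar (γ : ℝ) (Si Sst : ℝ) (Ui : St) : St :=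
  eulerF γ Ui + Si • (Ustar γ Si Sst Ui - Ui)

/-- The HLLC numerical flux. -/
def Fhllc (γ : ℝ) (UL UR : St) : St :=
  if 0 ≤ SL γ UL UR then eulerF γ UL
  else if 0 ≤ Sstar γ UL UR then Fstar γ (SL γ UL UR) (Sstar γ UL UR) UL
  else if 0 ≤ SR γ UL UR then Fstar γ (SR γ UL UR) (Sstar γ UL UR) UR
  else eulerF γ UR

end

/-!
The HLLC flux is the flux at `x/t = 0` of a fan of three waves `S_L < S_* < S_R` separating the
admissible states `U_L, U_{*L}, U_{*R}, U_R`, with the Rankine–Hugoniot relation holding across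
each wave (across the contact because both intermediate states carry the same pressure). So a
one-sided update `U_L - c (F^hllc - F(U_L))`, or `U_R + c (F^hllc - F(U_R))`, telescopes into a
convex combination of the four states once `c |S_L|, c |S_R| ≤ 1`, and lies in the convex set `G`.
The intermediate states are admissible because `γ p_i ≤ ρ_i (S_i - u_i)²`. The three-state update
is the average of two one-sided updates with `c = 2λ`, and scaling a state by `ζ > 0` preserves
admissibility and all wave speeds.
-/

section Fan

variable {E : Type*} [AddCommGroup E] [Module ℝ E]

theorem Convex.add_telescope_mem {C : Set E} (hC : Convex ℝ C) {W₀ W₁ W₂ W₃ : E}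
    (h₀ : W₀ ∈ C) (h₁ : W₁ ∈ C) (h₂ : W₂ ∈ C) (h₃ : W₃ ∈ C) {a₁ a₂ a₃ : ℝ}
    (ha₃ : 0 ≤ a₃) (ha₂₃ : a₃ ≤ a₂) (ha₁₂ : a₂ ≤ a₁) (ha₁ : a₁ ≤ 1) :
    W₀ + a₁ • (W₁ - W₀) + a₂ • (W₂ - W₁) + a₃ • (W₃ - W₂) ∈ C := by
  have hmem := hC.sum_mem (t := Finset.univ) (w := ![1 - a₁, a₁ - a₂, a₂ - a₃, a₃])
    (z := ![W₀, W₁, W₂, W₃]) (by simp [Fin.forall_fin_succ]; grind)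
    (by simp [Fin.sum_univ_four]) (by simp [Fin.forall_fin_succ, *])
  convert hmem using 1
  simp only [Fin.sum_univ_four, Matrix.cons_val]
  module

/-- The flux read off at `x/t = 0` from a Riemann fan of three waves of speeds `s₁ ≤ s₂ ≤ s₃`
separating four states whose fluxes are `G₀, …, G₃`. -/
noncomputable def fanFlux (s₁ s₂ s₃ : ℝ) (G₀ G₁ G₂ G₃ : E) : E :=
  if 0 ≤ s₁ then G₀ else if 0 ≤ s₂ then G₁ else if 0 ≤ s₃ then G₂ else G₃

variable {s₁ s₂ s₃ : ℝ} {W₀ W₁ W₂ W₃ G₀ G₁ G₂ G₃ : E}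

theorem fanFlux_eq_add (h₁₂ : s₁ ≤ s₂) (h₂₃ : s₂ ≤ s₃)
    (hG₁ : G₁ - G₀ = s₁ • (W₁ - W₀)) (hG₂ : G₂ - G₁ = s₂ • (W₂ - W₁))
    (hG₃ : G₃ - G₂ = s₃ • (W₃ - W₂)) :
    fanFlux s₁ s₂ s₃ G₀ G₁ G₂ G₃
      = G₀ + min s₁ 0 • (W₁ - W₀) + min s₂ 0 • (W₂ - W₁) + min s₃ 0 • (W₃ - W₂) := by
  unfold fanFlux
  split_ifs with h₁ h₂ h₃
  · simp [h₁, h₁.trans h₁₂, h₁.trans (h₁₂.trans h₂₃)]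
  · simp only [min_eq_left (not_le.1 h₁).le, min_eq_right h₂, min_eq_right (h₂.trans h₂₃)]
    linear_combination (norm := module) hG₁
  · simp only [min_eq_left (not_le.1 h₁).le, min_eq_left (not_le.1 h₂).le, min_eq_right h₃]
    linear_combination (norm := module) hG₁ + hG₂
  · simp only [min_eq_left (not_le.1 h₁).le, min_eq_left (not_le.1 h₂).le,
      min_eq_left (not_le.1 h₃).le]
    linear_combination (norm := module) hG₁ + hG₂ + hG₃

theorem fanFlux_eq_sub (h₁₂ : s₁ ≤ s₂) (h₂₃ : s₂ ≤ s₃)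
    (hG₁ : G₁ - G₀ = s₁ • (W₁ - W₀)) (hG₂ : G₂ - G₁ = s₂ • (W₂ - W₁))
    (hG₃ : G₃ - G₂ = s₃ • (W₃ - W₂)) :
    fanFlux s₁ s₂ s₃ G₀ G₁ G₂ G₃
      = G₃ - max s₁ 0 • (W₁ - W₀) - max s₂ 0 • (W₂ - W₁) - max s₃ 0 • (W₃ - W₂) := by
  rw [fanFlux_eq_add h₁₂ h₂₃ hG₁ hG₂ hG₃]
  linear_combination (norm := module) -hG₁ - hG₂ - hG₃ + (min_add_max s₁ 0) • (W₁ - W₀)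
    + (min_add_max s₂ 0) • (W₂ - W₁) + (min_add_max s₃ 0) • (W₃ - W₂)

theorem Convex.sub_smul_fanFlux_sub_mem {C : Set E} (hC : Convex ℝ C)
    (h₀ : W₀ ∈ C) (h₁ : W₁ ∈ C) (h₂ : W₂ ∈ C) (h₃ : W₃ ∈ C) (h₁₂ : s₁ ≤ s₂) (h₂₃ : s₂ ≤ s₃)
    (hG₁ : G₁ - G₀ = s₁ • (W₁ - W₀)) (hG₂ : G₂ - G₁ = s₂ • (W₂ - W₁))
    (hG₃ : G₃ - G₂ = s₃ • (W₃ - W₂)) {c : ℝ} (hc : 0 ≤ c) (hcs : -1 ≤ c * s₁) :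
    W₀ - c • (fanFlux s₁ s₂ s₃ G₀ G₁ G₂ G₃ - G₀) ∈ C := by
  rw [fanFlux_eq_add h₁₂ h₂₃ hG₁ hG₂ hG₃]
  convert hC.add_telescope_mem h₀ h₁ h₂ h₃ (a₁ := -(c * min s₁ 0)) (a₂ := -(c * min s₂ 0))
    (a₃ := -(c * min s₃ 0)) ?_ ?_ ?_ ?_ using 1
  · module
  · exact neg_nonneg.2 (mul_nonpos_of_nonneg_of_nonpos hc (min_le_right _ _))
  · exact neg_le_neg (mul_le_mul_of_nonneg_left (min_le_min_right 0 h₂₃) hc)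
  · exact neg_le_neg (mul_le_mul_of_nonneg_left (min_le_min_right 0 h₁₂) hc)
  · rw [mul_min_of_nonneg _ _ hc, mul_zero]
    exact neg_le.1 (le_min hcs (by norm_num))

theorem Convex.add_smul_fanFlux_sub_mem {C : Set E} (hC : Convex ℝ C)
    (h₀ : W₀ ∈ C) (h₁ : W₁ ∈ C) (h₂ : W₂ ∈ C) (h₃ : W₃ ∈ C) (h₁₂ : s₁ ≤ s₂) (h₂₃ : s₂ ≤ s₃)
    (hG₁ : G₁ - G₀ = s₁ • (W₁ - W₀)) (hG₂ : G₂ - G₁ = s₂ • (W₂ - W₁))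
    (hG₃ : G₃ - G₂ = s₃ • (W₃ - W₂)) {c : ℝ} (hc : 0 ≤ c) (hcs : c * s₃ ≤ 1) :
    W₃ + c • (fanFlux s₁ s₂ s₃ G₀ G₁ G₂ G₃ - G₃) ∈ C := by
  rw [fanFlux_eq_sub h₁₂ h₂₃ hG₁ hG₂ hG₃]
  convert hC.add_telescope_mem h₀ h₁ h₂ h₃ (a₁ := 1 - c * max s₁ 0) (a₂ := 1 - c * max s₂ 0)
    (a₃ := 1 - c * max s₃ 0) ?_ ?_ ?_ ?_ using 1
  · module
  · rw [mul_max_of_nonneg _ _ hc, mul_zero, sub_nonneg]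
    exact max_le hcs zero_le_one
  · exact sub_le_sub_left (mul_le_mul_of_nonneg_left (max_le_max_right 0 h₂₃) hc) 1
  · exact sub_le_sub_left (mul_le_mul_of_nonneg_left (max_le_max_right 0 h₁₂) hc) 1
  · exact sub_le_self 1 (mul_nonneg hc (le_max_right _ _))

end Fan

theorem mem_admG_iff {U : St} : U ∈ admG ↔ 0 < U.1 ∧ U.2.1 ^ 2 < 2 * U.1 * U.2.2 := by
  refine and_congr_right fun hρ => ?_
  rw [sub_pos, div_lt_iff₀ (by positivity)]
  constructor <;> intro h <;> linarith

theorem smul_mem_admG {ζ : ℝ} (hζ : 0 < ζ) {U : St} (hU : U ∈ admG) : ζ • U ∈ admG := by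
  obtain ⟨hρ, hm⟩ := mem_admG_iff.1 hU
  refine mem_admG_iff.2 ⟨mul_pos hζ hρ, ?_⟩
  simp only [Prod.smul_fst, Prod.smul_snd, smul_eq_mul]
  nlinarith [mul_lt_mul_of_pos_left hm (mul_pos hζ hζ)]

theorem add_mem_admG {U V : St} (hU : U ∈ admG) (hV : V ∈ admG) : U + V ∈ admG := by
  obtain ⟨hρU, hmU⟩ := mem_admG_iff.1 hU
  obtain ⟨hρV, hmV⟩ := mem_admG_iff.1 hV
  refine mem_admG_iff.2 ⟨add_pos hρU hρV, ?_⟩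
  simp only [Prod.fst_add, Prod.snd_add]
  nlinarith [sq_nonneg (U.1 * V.2.1 - V.1 * U.2.1), mul_pos hρU hρV,
    mul_pos (mul_pos hρU hρU) (sub_pos.2 hmV), mul_pos (mul_pos hρV hρV) (sub_pos.2 hmU)]

theorem convex_admG : Convex ℝ admG :=
  convex_iff_forall_pos.2 fun _ hU _ hV _ _ ha hb _ =>
    add_mem_admG (smul_mem_admG ha hU) (smul_mem_admG hb hV)

theorem smul_mk_mem_admG {k t h : ℝ} (hk : 0 < k) (hth : t ^ 2 < 2 * h) :
    k • ((1, t, h) : St) ∈ admG := by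
  refine mem_admG_iff.2 ⟨by simpa using hk, ?_⟩
  simp only [Prod.smul_fst, Prod.smul_snd, smul_eq_mul]
  nlinarith [mul_lt_mul_of_pos_left hth (mul_pos hk hk)]

section Thermodynamics

variable {γ : ℝ} {U : St}

theorem press_pos (hγ : 1 < γ) (hU : U ∈ admG) : 0 < press γ U :=
  mul_pos (sub_pos.2 hγ) hU.2

theorem press_eq_mul_specE (hρ : U.1 ≠ 0) : press γ U = (γ - 1) * U.1 * specE U := by
  rw [press, specE]
  field_simp

theorem mul_sound_sq (hγ : 1 < γ) (hU : U ∈ admG) : U.1 * sound γ U ^ 2 = γ * press γ U := by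
  have := press_pos hγ hU
  rw [sound, Real.sq_sqrt (div_nonneg (by positivity) hU.1.le)]
  field_simp [hU.1.ne']

theorem sound_pos (hγ : 1 < γ) (hU : U ∈ admG) : 0 < sound γ U :=
  Real.sqrt_pos.2 (div_pos (mul_pos (by linarith) (press_pos hγ hU)) hU.1)

theorem press_lt_mul_of_sound_le (hγ : 1 < γ) (hU : U ∈ admG) {a b : ℝ}
    (ha : sound γ U ≤ a) (hb : sound γ U ≤ b) : press γ U < U.1 * (a * b) := by
  have hc := sound_pos hγ hU
  have hp := press_pos hγ hU
  calc press γ U < γ * press γ U := by nlinarith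
    _ = U.1 * sound γ U ^ 2 := (mul_sound_sq hγ hU).symm
    _ ≤ U.1 * (a * b) := by
      rw [sq]
      exact mul_le_mul_of_nonneg_left (mul_le_mul ha hb hc.le (hc.le.trans ha)) hU.1.le

end Thermodynamics

section Scaling

variable (γ : ℝ) {ζ : ℝ} (U : St)

theorem vel_smul (hζ : ζ ≠ 0) : vel (ζ • U) = vel U := by
  simp only [vel, Prod.smul_fst, Prod.smul_snd, smul_eq_mul, mul_div_mul_left _ _ hζ]

theorem press_smul (hζ : ζ ≠ 0) : press γ (ζ • U) = ζ * press γ U := by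
  simp only [press, Prod.smul_fst, Prod.smul_snd, smul_eq_mul]
  rcases eq_or_ne U.1 0 with h | h
  · simp [h]
    ring
  · field_simp

theorem sound_smul (hζ : 0 < ζ) : sound γ (ζ • U) = sound γ U := by
  rw [sound, sound, press_smul γ U hζ.ne', Prod.smul_fst, smul_eq_mul, mul_left_comm,
    mul_div_mul_left _ _ hζ.ne']

theorem alphaMax_smul (hζ : 0 < ζ) : alphaMax γ (ζ • U) = alphaMax γ U := by
  rw [alphaMax, alphaMax, vel_smul U hζ.ne', sound_smul γ U hζ]

end Scaling

section WaveSpeeds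

theorem neg_alphaMax_le_alphaMinus (γ : ℝ) (U : St) : -alphaMax γ U ≤ alphaMinus γ U := by
  rw [alphaMax, alphaMinus]
  linarith [neg_abs_le (vel U)]

theorem alphaPlus_le_alphaMax (γ : ℝ) (U : St) : alphaPlus γ U ≤ alphaMax γ U := by
  rw [alphaMax, alphaPlus]
  linarith [le_abs_self (vel U)]

theorem sound_le_vel_sub_SL_left (γ : ℝ) (VL VR : St) : sound γ VL ≤ vel VL - SL γ VL VR := by
  unfold SL alphaMinus
  linarith [min_le_left (vel VL - sound γ VL) (vel VR - sound γ VR)]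

theorem sound_le_vel_sub_SL_right (γ : ℝ) (VL VR : St) : sound γ VR ≤ vel VR - SL γ VL VR := by
  unfold SL alphaMinus
  linarith [min_le_right (vel VL - sound γ VL) (vel VR - sound γ VR)]

theorem sound_le_SR_sub_vel_left (γ : ℝ) (VL VR : St) : sound γ VL ≤ SR γ VL VR - vel VL := by
  unfold SR alphaPlus
  linarith [le_max_left (vel VL + sound γ VL) (vel VR + sound γ VR)]

theorem sound_le_SR_sub_vel_right (γ : ℝ) (VL VR : St) : sound γ VR ≤ SR γ VL VR - vel VR := by
  unfold SR alphaPlus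
  linarith [le_max_right (vel VL + sound γ VL) (vel VR + sound γ VR)]

variable {γ : ℝ} {VL VR : St}

theorem SL_sub_vel_left_neg (hγ : 1 < γ) (hL : VL ∈ admG) : SL γ VL VR - vel VL < 0 := by
  linarith [sound_pos hγ hL, sound_le_vel_sub_SL_left γ VL VR]

theorem SR_sub_vel_right_pos (hγ : 1 < γ) (hR : VR ∈ admG) : 0 < SR γ VL VR - vel VR := by
  linarith [sound_pos hγ hR, sound_le_SR_sub_vel_right γ VL VR]

theorem neg_one_le_mul_SL {c : ℝ} (hc : 0 ≤ c) (hcL : c * alphaMax γ VL ≤ 1)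
    (hcR : c * alphaMax γ VR ≤ 1) : -1 ≤ c * SL γ VL VR := by
  rw [SL, mul_min_of_nonneg _ _ hc]
  exact le_min (by nlinarith [neg_alphaMax_le_alphaMinus γ VL])
    (by nlinarith [neg_alphaMax_le_alphaMinus γ VR])

theorem mul_SR_le_one {c : ℝ} (hc : 0 ≤ c) (hcL : c * alphaMax γ VL ≤ 1)
    (hcR : c * alphaMax γ VR ≤ 1) : c * SR γ VL VR ≤ 1 := by
  rw [SR, mul_max_of_nonneg _ _ hc]
  exact max_le (by nlinarith [alphaPlus_le_alphaMax γ VL])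
    (by nlinarith [alphaPlus_le_alphaMax γ VR])

/-- The pressure `p_i + ρ_i (S_i - u_i)(S_* - u_i)` of the intermediate state `U_{*i}`; `S_*` is
exactly the speed `t` at which the two sides agree. -/
noncomputable def starPress (γ S : ℝ) (U : St) (t : ℝ) : ℝ :=
  press γ U + U.1 * (S - vel U) * (t - vel U)

theorem starPress_sub_starPress
    (hD : VL.1 * (SL γ VL VR - vel VL) - VR.1 * (SR γ VL VR - vel VR) ≠ 0) (t : ℝ) :
    starPress γ (SL γ VL VR) VL t - starPress γ (SR γ VL VR) VR t
      = (VL.1 * (SL γ VL VR - vel VL) - VR.1 * (SR γ VL VR - vel VR)) * (t - Sstar γ VL VR) := by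
  rw [starPress, starPress, Sstar]
  field_simp
  ring

theorem Sstar_denom_neg (hγ : 1 < γ) (hL : VL ∈ admG) (hR : VR ∈ admG) :
    VL.1 * (SL γ VL VR - vel VL) - VR.1 * (SR γ VL VR - vel VR) < 0 :=
  sub_neg.2 ((mul_neg_of_pos_of_neg hL.1 (SL_sub_vel_left_neg hγ hL)).trans
    (mul_pos hR.1 (SR_sub_vel_right_pos hγ hR)))

theorem Sstar_mem_Ioo (hγ : 1 < γ) (hL : VL ∈ admG) (hR : VR ∈ admG) :
    Sstar γ VL VR ∈ Set.Ioo (SL γ VL VR) (SR γ VL VR) := by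
  have hD := Sstar_denom_neg hγ hL hR
  have hsplit := starPress_sub_starPress hD.ne
  constructor
  · have hR' := press_lt_mul_of_sound_le hγ hR
      (sound_le_SR_sub_vel_right γ VL VR) (sound_le_vel_sub_SL_right γ VL VR)
    have : 0 < starPress γ (SL γ VL VR) VL (SL γ VL VR)
        - starPress γ (SR γ VL VR) VR (SL γ VL VR) := by
      rw [starPress, starPress]
      nlinarith [press_pos hγ hL, mul_nonneg hL.1.le (sq_nonneg (SL γ VL VR - vel VL))]
    rw [hsplit] at this
    linarith [neg_of_mul_pos_right this hD.le]
  · have hL' := press_lt_mul_of_sound_le hγ hL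
      (sound_le_vel_sub_SL_left γ VL VR) (sound_le_SR_sub_vel_left γ VL VR)
    have : starPress γ (SL γ VL VR) VL (SR γ VL VR)
        - starPress γ (SR γ VL VR) VR (SR γ VL VR) < 0 := by
      rw [starPress, starPress]
      nlinarith [press_pos hγ hR, mul_nonneg hR.1.le (sq_nonneg (SR γ VL VR - vel VR))]
    rw [hsplit] at this
    linarith [pos_of_mul_neg_right this hD.le]

end WaveSpeeds

section StarStates

variable {γ : ℝ}

theorem Ustar_mem_admG (hγ : 1 < γ) {U : St} (hU : U ∈ admG) {s t : ℝ}
    (hst : 0 < (s - vel U) / (s - t)) (hs : sound γ U ≤ |s - vel U|) :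
    Ustar γ s t U ∈ admG := by
  have hρ := hU.1
  have hp := press_pos hγ hU
  have he : 0 < specE U := div_pos hU.2 hρ
  have hsu : s - vel U ≠ 0 := by
    rintro h
    simp [h] at hst
  set q := press γ U / (U.1 * (s - vel U))
  have hsq : U.1 * (γ * press γ U) ≤ (U.1 * (s - vel U)) ^ 2 := by
    have : sound γ U ^ 2 ≤ (s - vel U) ^ 2 := by
      rw [← sq_abs (s - vel U)]
      exact pow_le_pow_left₀ (sound_pos hγ hU).le hs 2
    rw [← mul_sound_sq hγ hU, mul_pow]
    nlinarith [mul_le_mul_of_nonneg_left this (mul_nonneg hρ.le hρ.le)]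
  have hq : q ^ 2 < 2 * specE U :=
    calc q ^ 2 = press γ U ^ 2 / (U.1 * (s - vel U)) ^ 2 := div_pow _ _ _
      _ ≤ press γ U ^ 2 / (U.1 * (γ * press γ U)) :=
        div_le_div_of_nonneg_left (by positivity) (by positivity) hsq
      _ = (γ - 1) / γ * specE U := by
        rw [press_eq_mul_specE hρ.ne']
        field_simp
      _ < 2 * specE U := by
        gcongr
        rw [div_lt_iff₀ (by linarith)]
        linarith
  have hE : U.2.2 / U.1 = specE U + vel U ^ 2 / 2 := by
    rw [specE, vel]
    field_simp
    ring
  refine smul_mk_mem_admG (mul_pos hρ hst) ?_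
  rw [hE]
  nlinarith [sq_nonneg (t - vel U + q)]

theorem Fstar_eq (γ s t : ℝ) (U : St) (hρ : U.1 ≠ 0) (hsu : s - vel U ≠ 0) (hst : s - t ≠ 0) :
    Fstar γ s t U = t • Ustar γ s t U + starPress γ s U t • ((0, 1, t) : St) := by
  have hsu' : U.1 * s - U.2.1 ≠ 0 := by
    rw [vel, sub_div' hρ, mul_comm] at hsu
    exact (div_ne_zero_iff.1 hsu).1
  ext <;> simp only [Fstar, Ustar, eulerF, starPress, vel, press, Prod.fst_add, Prod.snd_add,
    Prod.smul_fst, Prod.smul_snd, Prod.fst_sub, Prod.snd_sub, smul_eq_mul] <;> field_simp <;> ring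

end StarStates

section OneSided

variable {γ : ℝ} {VL VR : St}

theorem Ustar_SL_mem_admG (hγ : 1 < γ) (hL : VL ∈ admG) (hR : VR ∈ admG) :
    Ustar γ (SL γ VL VR) (Sstar γ VL VR) VL ∈ admG := by
  have hSL := SL_sub_vel_left_neg (VR := VR) hγ hL
  refine Ustar_mem_admG hγ hL (div_pos_of_neg_of_neg hSL ?_) ?_
  · linarith [(Sstar_mem_Ioo hγ hL hR).1]
  · rw [abs_of_neg hSL]
    linarith [sound_le_vel_sub_SL_left γ VL VR]

theorem Ustar_SR_mem_admG (hγ : 1 < γ) (hL : VL ∈ admG) (hR : VR ∈ admG) :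
    Ustar γ (SR γ VL VR) (Sstar γ VL VR) VR ∈ admG := by
  have hSR := SR_sub_vel_right_pos (VL := VL) hγ hR
  refine Ustar_mem_admG hγ hR (div_pos hSR ?_) ?_
  · linarith [(Sstar_mem_Ioo hγ hL hR).2]
  · rw [abs_of_pos hSR]
    exact sound_le_SR_sub_vel_right γ VL VR

theorem Fstar_SR_sub_Fstar_SL (hγ : 1 < γ) (hL : VL ∈ admG) (hR : VR ∈ admG) :
    Fstar γ (SR γ VL VR) (Sstar γ VL VR) VR - Fstar γ (SL γ VL VR) (Sstar γ VL VR) VL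
      = Sstar γ VL VR • (Ustar γ (SR γ VL VR) (Sstar γ VL VR) VR
          - Ustar γ (SL γ VL VR) (Sstar γ VL VR) VL) := by
  have hS := Sstar_mem_Ioo hγ hL hR
  have hp : starPress γ (SL γ VL VR) VL (Sstar γ VL VR)
      = starPress γ (SR γ VL VR) VR (Sstar γ VL VR) := by
    rw [← sub_eq_zero, starPress_sub_starPress (Sstar_denom_neg hγ hL hR).ne, sub_self, mul_zero]
  rw [Fstar_eq _ _ _ _ hL.1.ne' (SL_sub_vel_left_neg hγ hL).ne (sub_neg.2 hS.1).ne,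
    Fstar_eq _ _ _ _ hR.1.ne' (SR_sub_vel_right_pos hγ hR).ne' (sub_pos.2 hS.2).ne', hp]
  module

theorem sub_smul_Fhllc_sub_eulerF_mem_admG (hγ : 1 < γ) (hL : VL ∈ admG) (hR : VR ∈ admG)
    {c : ℝ} (hc : 0 ≤ c) (hcL : c * alphaMax γ VL ≤ 1) (hcR : c * alphaMax γ VR ≤ 1) :
    VL - c • (Fhllc γ VL VR - eulerF γ VL) ∈ admG :=
  convex_admG.sub_smul_fanFlux_sub_mem hL (Ustar_SL_mem_admG hγ hL hR)
    (Ustar_SR_mem_admG hγ hL hR) hR (Sstar_mem_Ioo hγ hL hR).1.le (Sstar_mem_Ioo hγ hL hR).2.le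
    (add_sub_cancel_left _ _) (Fstar_SR_sub_Fstar_SL hγ hL hR) (by rw [Fstar]; module) hc
    (neg_one_le_mul_SL hc hcL hcR)

theorem add_smul_Fhllc_sub_eulerF_mem_admG (hγ : 1 < γ) (hL : VL ∈ admG) (hR : VR ∈ admG)
    {c : ℝ} (hc : 0 ≤ c) (hcL : c * alphaMax γ VL ≤ 1) (hcR : c * alphaMax γ VR ≤ 1) :
    VR + c • (Fhllc γ VL VR - eulerF γ VR) ∈ admG :=
  convex_admG.add_smul_fanFlux_sub_mem hL (Ustar_SL_mem_admG hγ hL hR)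
    (Ustar_SR_mem_admG hγ hL hR) hR (Sstar_mem_Ioo hγ hL hR).1.le (Sstar_mem_Ioo hγ hL hR).2.le
    (add_sub_cancel_left _ _) (Fstar_SR_sub_Fstar_SL hγ hL hR) (by rw [Fstar]; module) hc
    (mul_SR_le_one hc hcL hcR)

end OneSided

/-- Lemma 2.11: scaled three-state HLLC positivity. -/
theorem hllc_scaled_three_state_positivity (γ : ℝ) (hγ : 1 < γ)
    (ζ₁ ζ₂ ζ₃ : ℝ) (hζ₁ : 0 < ζ₁) (hζ₂ : 0 < ζ₂) (hζ₃ : 0 < ζ₃)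
    (UL UM UR : St) (hUL : UL ∈ admG) (hUM : UM ∈ admG) (hUR : UR ∈ admG)
    (lam : ℝ) (hlam : 0 < lam)
    (hcfl : lam * max (alphaMax γ UL) (max (alphaMax γ UM) (alphaMax γ UR)) ≤ 1 / 2) :
    ζ₂ • UM - lam • (Fhllc γ (ζ₂ • UM) (ζ₃ • UR) - Fhllc γ (ζ₁ • UL) (ζ₂ • UM)) ∈ admG := by
  have hCFL {ζ : ℝ} (hζ : 0 < ζ) {U : St}
      (hU : alphaMax γ U ≤ max (alphaMax γ UL) (max (alphaMax γ UM) (alphaMax γ UR))) :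
      2 * lam * alphaMax γ (ζ • U) ≤ 1 := by
    rw [alphaMax_smul γ U hζ]
    nlinarith [mul_le_mul_of_nonneg_left hU hlam.le]
  have hcL := hCFL hζ₁ (le_max_left _ _)
  have hcM := hCFL hζ₂ ((le_max_left _ _).trans (le_max_right _ _))
  have hcR := hCFL hζ₃ ((le_max_right _ _).trans (le_max_right _ _))
  have hlam2 : 0 ≤ 2 * lam := by positivity
  have hM := smul_mem_admG hζ₂ hUM
  have hright := sub_smul_Fhllc_sub_eulerF_mem_admG hγ hM (smul_mem_admG hζ₃ hUR) hlam2 hcM hcR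
  have hleft := add_smul_Fhllc_sub_eulerF_mem_admG hγ (smul_mem_admG hζ₁ hUL) hM hlam2 hcL hcM
  convert convex_admG hright hleft (by norm_num : (0 : ℝ) ≤ 1 / 2) (by norm_num : (0 : ℝ) ≤ 1 / 2)
    (by norm_num) using 1
  module
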